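/- arXiv:2104.04804 — 2 statements merged into one kernel-verified Lean document; each statement's English description precedes it below -/
import Mathlib

section
/- With notation as above, let $j^1_xh \in J^1\mathfrak G$ and $j^1_xg \in K^1\mathfrak G$ (so $g(x) = \mathfrak e_x$). Then $\iota(j^1_xh\cdot j^1_xg\cdot j^1_x h^{-1}) = \mathrm{Adj}_{h(x)} \circ \iota(j^1_xg)$, where $\mathrm{Adj}_{h(x)}$ is the adjoint action of $h(x) \in \mathfrak G_x$ on $\mathrm{Lie}(\mathfrak G_x)$. -/
/-!
Conjugation by `h` is the two-variable map `C (y, k) = h y · k · (h y)⁻¹`. The jet product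
`h · g · h⁻¹` is `C` along the graph of `g`, while `C` along the graph of `e` is `e` itself.
By the chain rule the two differentials at `x` share the partial derivative of `C` in `y`,
because `g x = e x`; so their difference is the partial derivative of `C` in `k`, which is
`Adj_{h x}`, applied to `d_x g - d_x e`.
-/

section GraphDerivative

variable {𝕜 : Type*} [NontriviallyNormedField 𝕜]
  {E : Type*} [NormedAddCommGroup E] [NormedSpace 𝕜 E] {H : Type*} [TopologicalSpace H]
  {I : ModelWithCorners 𝕜 E H} {M : Type*} [TopologicalSpace M] [ChartedSpace H M]
  {E' : Type*} [NormedAddCommGroup E'] [NormedSpace 𝕜 E'] {H' : Type*} [TopologicalSpace H']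
  {I' : ModelWithCorners 𝕜 E' H'} {N : Type*} [TopologicalSpace N] [ChartedSpace H' N]
  {E'' : Type*} [NormedAddCommGroup E''] [NormedSpace 𝕜 E''] {H'' : Type*}
  [TopologicalSpace H''] {I'' : ModelWithCorners 𝕜 E'' H''} {P : Type*} [TopologicalSpace P]
  [ChartedSpace H'' P]

theorem mfderiv_comp_graph_apply {F : M × N → P} {f : M → N} {x : M}
    (hF : MDifferentiableAt (I.prod I') I'' F (x, f x)) (hf : MDifferentiableAt I I' f x)
    (v : TangentSpace I x) :
    mfderiv I I'' (fun y => F (y, f y)) x v =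
      mfderiv I I'' (fun y => F (y, f x)) x v +
        mfderiv I' I'' (fun k => F (x, k)) (f x) (mfderiv I I' f x v) := by
  have hgraph : MDifferentiableAt I (I.prod I') (fun y => (y, f y)) x :=
    mdifferentiableAt_id.prodMk hf
  have hgraph_deriv : mfderiv I (I.prod I') (fun y => (y, f y)) x =
      (ContinuousLinearMap.id 𝕜 E).prod (mfderiv I I' f x) := by
    have := mfderiv_prodMk mdifferentiableAt_id hf
    rwa [mfderiv_id] at this
  rw [show (fun y => F (y, f y)) = F ∘ fun y => (y, f y) from rfl,
    mfderiv_comp_apply x hF hgraph, hgraph_deriv, mfderiv_prod_eq_add_apply hF]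
  rfl

-- The casts `id (α := _)` are needed because the two differentials land in tangent spaces at
-- syntactically different points; only their common model space has the subtraction.
theorem mfderiv_comp_graph_sub_of_eq {F : M × N → P} {f₁ f₂ : M → N} {x : M}
    (hF : MDifferentiableAt (I.prod I') I'' F (x, f₁ x)) (hf₁ : MDifferentiableAt I I' f₁ x)
    (hf₂ : MDifferentiableAt I I' f₂ x) (hx : f₁ x = f₂ x) (v : TangentSpace I x) :
    id (α := E'') (mfderiv I I'' (fun y => F (y, f₁ y)) x v) -
        id (α := E'') (mfderiv I I'' (fun y => F (y, f₂ y)) x v) =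
      mfderiv I' I'' (fun k => F (x, k)) (f₁ x)
        (id (α := E') (mfderiv I I' f₁ x v) - id (α := E') (mfderiv I I' f₂ x v)) := by
  rw [mfderiv_comp_graph_apply hF hf₁, mfderiv_comp_graph_apply (hx ▸ hF) hf₂, ← hx]
  exact (add_sub_add_left_eq_sub _ _ _).trans (map_sub _ _ _).symm

end GraphDerivative

theorem jet_conjugation_is_adjoint_general
    {EM : Type*} [NormedAddCommGroup EM] [NormedSpace ℝ EM]
    {HM : Type*} [TopologicalSpace HM] {IM : ModelWithCorners ℝ EM HM}
    {M : Type*} [TopologicalSpace M] [ChartedSpace HM M]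
    {EG : Type*} [NormedAddCommGroup EG] [NormedSpace ℝ EG]
    {HG : Type*} [TopologicalSpace HG] {IG : ModelWithCorners ℝ EG HG}
    {𝔾 : Type*} [TopologicalSpace 𝔾] [ChartedSpace HG 𝔾]
    (π : 𝔾 → M)
    (m : 𝔾 → 𝔾 → 𝔾) (i : 𝔾 → 𝔾) (e : M → 𝔾)
    (hm : ContMDiff (IG.prod IG) IG (⊤ : ℕ∞) (Function.uncurry m))
    (hi : ContMDiff IG IG (⊤ : ℕ∞) i) (he : ContMDiff IM IG (⊤ : ℕ∞) e)
    (hone : ∀ g : 𝔾, m (e (π g)) g = g ∧ m g (e (π g)) = g)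
    (hinv : ∀ g : 𝔾, m g (i g) = e (π g) ∧ m (i g) g = e (π g))
    (x : M) (h g : M → 𝔾)
    (hh : ContMDiffAt IM IG (⊤ : ℕ∞) h x) (hg : ContMDiffAt IM IG (⊤ : ℕ∞) g x)
    (hhs : ∀ᶠ y in nhds x, π (h y) = y)
    (hgx : g x = e x) :
    ∀ v : TangentSpace IM x,
      id (α := EG) (mfderiv IM IG (fun y => m (m (h y) (g y)) (i (h y))) x v) -
          id (α := EG) (mfderiv IM IG e x v) =
        id (α := EG)
          ((mfderiv IG IG (fun k => m (m (h x) k) (i (h x))) (e x))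
            (id (α := TangentSpace IG (e x))
              (id (α := EG) (mfderiv IM IG g x v) -
                id (α := EG) (mfderiv IM IG e x v)))) := by
  intro v
  set conj : M × 𝔾 → 𝔾 := fun p => m (m (h p.1) p.2) (i (h p.1))
  have hconj : ContMDiffAt (IM.prod IG) IG (⊤ : ℕ∞) conj (x, g x) := by
    have hh₁ : ContMDiffAt (IM.prod IG) IG (⊤ : ℕ∞) (fun p : M × 𝔾 => h p.1) (x, g x) :=
      hh.comp _ contMDiffAt_fst
    exact hm.contMDiffAt.comp _ ((hm.contMDiffAt.comp _ (hh₁.prodMk contMDiffAt_snd)).prodMk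
      (hi.contMDiffAt.comp _ hh₁))
  have hconj_unit : (fun y => conj (y, e y)) =ᶠ[nhds x] e := by
    filter_upwards [hhs] with y hy
    obtain ⟨-, hmul_unit⟩ := hone (h y)
    obtain ⟨hmul_inv, -⟩ := hinv (h y)
    rw [hy] at hmul_unit hmul_inv
    show m (m (h y) (e y)) (i (h y)) = e y
    rw [hmul_unit, hmul_inv]
  have key := mfderiv_comp_graph_sub_of_eq (hconj.mdifferentiableAt (by simp))
    (hg.mdifferentiableAt (by simp)) (he.contMDiffAt.mdifferentiableAt (by simp)) hgx v
  rw [hconj_unit.mfderiv_eq, hgx] at key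
  exact key

/-- Conjugation on jets: for a jet `j¹_x h ∈ J¹𝔾` and a kernel jet
`j¹_x g ∈ K¹𝔾` (so `g x = e x`),
`ι (j¹_x h · j¹_x g · j¹_x h⁻¹) = Adj_{h x} ∘ ι (j¹_x g)`, where `Adj_{h x}` is the
adjoint action of `h x ∈ 𝔾_x` on `Lie(𝔾_x)`, i.e. the differential at `e x` of the
conjugation `k ↦ (h x) · k · (h x)⁻¹`, and `ι (j¹_x g) = d_x g - d_x e`. -/
theorem jet_conjugation_is_adjoint
    {EM : Type*} [NormedAddCommGroup EM] [NormedSpace ℝ EM]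
    {HM : Type*} [TopologicalSpace HM] {IM : ModelWithCorners ℝ EM HM}
    {M : Type*} [TopologicalSpace M] [ChartedSpace HM M] [IsManifold IM (⊤ : ℕ∞) M]
    {EG : Type*} [NormedAddCommGroup EG] [NormedSpace ℝ EG]
    {HG : Type*} [TopologicalSpace HG] {IG : ModelWithCorners ℝ EG HG}
    {𝔾 : Type*} [TopologicalSpace 𝔾] [ChartedSpace HG 𝔾] [IsManifold IG (⊤ : ℕ∞) 𝔾]
    (π : 𝔾 → M) (hπ : ContMDiff IG IM (⊤ : ℕ∞) π)
    (hsub : ∀ g : 𝔾, Function.Surjective (mfderiv IG IM π g))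
    (m : 𝔾 → 𝔾 → 𝔾) (i : 𝔾 → 𝔾) (e : M → 𝔾)
    (hm : ContMDiff (IG.prod IG) IG (⊤ : ℕ∞) (Function.uncurry m))
    (hi : ContMDiff IG IG (⊤ : ℕ∞) i) (he : ContMDiff IM IG (⊤ : ℕ∞) e)
    (hπe : ∀ x : M, π (e x) = x)
    (hπm : ∀ g h : 𝔾, π g = π h → π (m g h) = π g)
    (hπi : ∀ g : 𝔾, π (i g) = π g)
    (hassoc : ∀ g h k : 𝔾, π g = π h → π h = π k → m (m g h) k = m g (m h k))
    (hone : ∀ g : 𝔾, m (e (π g)) g = g ∧ m g (e (π g)) = g)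
    (hinv : ∀ g : 𝔾, m g (i g) = e (π g) ∧ m (i g) g = e (π g))
    (x : M) (h g : M → 𝔾)
    (hh : ContMDiffAt IM IG (⊤ : ℕ∞) h x) (hg : ContMDiffAt IM IG (⊤ : ℕ∞) g x)
    (hhs : ∀ᶠ y in nhds x, π (h y) = y) (hgs : ∀ᶠ y in nhds x, π (g y) = y)
    (hgx : g x = e x) :
    ∀ v : TangentSpace IM x,
      id (α := EG) (mfderiv IM IG (fun y => m (m (h y) (g y)) (i (h y))) x v) -
          id (α := EG) (mfderiv IM IG e x v) =
        id (α := EG)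
          ((mfderiv IG IG (fun k => m (m (h x) k) (i (h x))) (e x))
            (id (α := TangentSpace IG (e x))
              (id (α := EG) (mfderiv IM IG g x v) -
                id (α := EG) (mfderiv IM IG e x v)))) :=
  jet_conjugation_is_adjoint_general π m i e hm hi he hone hinv x h g hh hg hhs hgx
end

section
/- Let $\sigma$ and $\tilde\sigma$ be the jet-bundle sections of two group connections on a group bundle $\mathfrak G\to M$ (so $\sigma,\tilde\sigma\colon\mathfrak G\to J^1\mathfrak G$ are group bundle morphisms splitting $\pi_{1,0}$). Then for every $x\in M$ and $\vec X \in T_xM$, the map $g \mapsto \iota(\sigma(g)\tilde\sigma(g)^{-1})(\vec X)$ from $\mathfrak G_x$ to $\mathrm{Lie}(\mathfrak G_x)$ is a $1$-cocycle for the adjoint representation: for $g,h\in\mathfrak G_x$, $\theta(gh)(\vec X) = \theta(g)(\vec X) + \mathrm{Adj}_g(\theta(h)(\vec X))$, where $\theta(g) = \iota(\sigma(g)\tilde\sigma(g)^{-1})$. -/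
/-!
Write `σ(g) = j¹ₓ s_g` and `σ'(g) = j¹ₓ s'_g`. The morphism property of `σ` and `σ'` lets one
replace `s_{gh}` and `s'_{gh}` by `s_g s_h` and `s'_g s'_h` in the jet of `s_{gh} (s'_{gh})⁻¹`,
and in each fibre `(ab)(a'b')⁻¹ = (a a'⁻¹) · a' (b b'⁻¹) a'⁻¹`. Both factors are local sections
through the unit at `x`. By the chain rule through the partial derivatives of the multiplication,
together with `u e = u` and `e w = w`, the differential is additive on such sections up to `de`:
`d(uw) = du + dw - de`; the same argument with `s e s⁻¹ = e` gives
`d(s w s⁻¹) = de + Adj_g (dw - de)` when `s x = g`.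
-/

open Manifold Set Filter

section Calculus

variable {𝕜 : Type*} [NontriviallyNormedField 𝕜]
  {E : Type*} [NormedAddCommGroup E] [NormedSpace 𝕜 E] {H : Type*} [TopologicalSpace H]
  {I : ModelWithCorners 𝕜 E H} {M : Type*} [TopologicalSpace M] [ChartedSpace H M]
  {E₁ : Type*} [NormedAddCommGroup E₁] [NormedSpace 𝕜 E₁] {H₁ : Type*} [TopologicalSpace H₁]
  {I₁ : ModelWithCorners 𝕜 E₁ H₁} {N₁ : Type*} [TopologicalSpace N₁] [ChartedSpace H₁ N₁]
  {E₂ : Type*} [NormedAddCommGroup E₂] [NormedSpace 𝕜 E₂] {H₂ : Type*} [TopologicalSpace H₂]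
  {I₂ : ModelWithCorners 𝕜 E₂ H₂} {N₂ : Type*} [TopologicalSpace N₂] [ChartedSpace H₂ N₂]
  {E' : Type*} [NormedAddCommGroup E'] [NormedSpace 𝕜 E'] {H' : Type*} [TopologicalSpace H']
  {I' : ModelWithCorners 𝕜 E' H'} {N : Type*} [TopologicalSpace N] [ChartedSpace H' N]

theorem mfderiv_comp_prodMk_of_eq {F : N₁ × N₂ → N} {f : M → N₁} {g : M → N₂} {x : M}
    {a : N₁} {b : N₂} (hF : MDifferentiableAt (I₁.prod I₂) I' F (a, b))
    (hf : MDifferentiableAt I I₁ f x) (hg : MDifferentiableAt I I₂ g x)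
    (ha : f x = a) (hb : g x = b) :
    mfderiv I I' (fun y => F (f y, g y)) x =
      (mfderiv (I₁.prod I₂) I' F (a, b)).comp ((mfderiv I I₁ f x).prod (mfderiv I I₂ g x)) := by
  subst ha hb
  exact (mfderiv_comp (f := fun y => (f y, g y)) x hF (hf.prodMk hg)).trans
    (congrArg _ (mfderiv_prodMk hf hg))

-- `TangentSpace I₁ (f x)` and `TangentSpace I₁ a` are distinct types, both `E₁` by definition;
-- the `id (α := E')` casts state the identity in the model space.
theorem mfderiv_comp_prodMk_apply {F : N₁ × N₂ → N} {f : M → N₁} {g : M → N₂} {x : M}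
    {a : N₁} {b : N₂} (hF : MDifferentiableAt (I₁.prod I₂) I' F (a, b))
    (hf : MDifferentiableAt I I₁ f x) (hg : MDifferentiableAt I I₂ g x)
    (ha : f x = a) (hb : g x = b) (v : TangentSpace I x) :
    id (α := E') (mfderiv I I' (fun y => F (f y, g y)) x v) =
      id (α := E') (mfderiv I₁ I' (fun a' => F (a', b)) a (mfderiv I I₁ f x v)) +
        id (α := E') (mfderiv I₂ I' (fun b' => F (a, b')) b (mfderiv I I₂ g x v)) := by
  rw [mfderiv_comp_prodMk_of_eq hF hf hg ha hb]
  exact mfderiv_prod_eq_add_apply hF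

theorem mfderiv_comp_prodMk_congr {F : N₁ × N₂ → N} {f₁ f₂ : M → N₁} {g₁ g₂ : M → N₂} {x : M}
    {a : N₁} {b : N₂} (hF : MDifferentiableAt (I₁.prod I₂) I' F (a, b))
    (hf₁ : MDifferentiableAt I I₁ f₁ x) (hg₁ : MDifferentiableAt I I₂ g₁ x)
    (hf₂ : MDifferentiableAt I I₁ f₂ x) (hg₂ : MDifferentiableAt I I₂ g₂ x)
    (hf₁a : f₁ x = a) (hg₁b : g₁ x = b) (hf₂a : f₂ x = a) (hg₂b : g₂ x = b)
    (hf : mfderiv I I₁ f₁ x = mfderiv I I₁ f₂ x) (hg : mfderiv I I₂ g₁ x = mfderiv I I₂ g₂ x) :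
    mfderiv I I' (fun y => F (f₁ y, g₁ y)) x = mfderiv I I' (fun y => F (f₂ y, g₂ y)) x := by
  rw [mfderiv_comp_prodMk_of_eq hF hf₁ hg₁ hf₁a hg₁b,
    mfderiv_comp_prodMk_of_eq hF hf₂ hg₂ hf₂a hg₂b, hf, hg]
  rfl

end Calculus

structure IsFiberwiseGroup {𝔾 M : Type*} (π : 𝔾 → M) (m : 𝔾 → 𝔾 → 𝔾) (i : 𝔾 → 𝔾) (e : M → 𝔾) :
    Prop where
  proj_one : ∀ x, π (e x) = x
  proj_mul : ∀ g h, π g = π h → π (m g h) = π g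
  proj_inv : ∀ g, π (i g) = π g
  mul_assoc : ∀ g h k, π g = π h → π h = π k → m (m g h) k = m g (m h k)
  mul_one : ∀ g, m g (e (π g)) = g
  mul_inv_cancel : ∀ g, m g (i g) = e (π g)

namespace IsFiberwiseGroup

variable {𝔾 M : Type*} {π : 𝔾 → M} {m : 𝔾 → 𝔾 → 𝔾} {i : 𝔾 → 𝔾} {e : M → 𝔾}

theorem proj_mul_of_proj_eq (hG : IsFiberwiseGroup π m i e) {g h : 𝔾} {x : M} (hg : π g = x)
    (hh : π h = x) : π (m g h) = x :=
  (hG.proj_mul g h (hg.trans hh.symm)).trans hg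

theorem proj_inv_of_proj_eq (hG : IsFiberwiseGroup π m i e) {g : 𝔾} {x : M} (hg : π g = x) :
    π (i g) = x :=
  (hG.proj_inv g).trans hg

abbrev fiberGroup (hG : IsFiberwiseGroup π m i e) (x : M) : Group {g : 𝔾 // π g = x} :=
  letI : Mul {g : 𝔾 // π g = x} := ⟨fun g h => ⟨m g h, hG.proj_mul_of_proj_eq g.2 h.2⟩⟩
  letI : One {g : 𝔾 // π g = x} := ⟨⟨e x, hG.proj_one x⟩⟩
  letI : Inv {g : 𝔾 // π g = x} := ⟨fun g => ⟨i g, hG.proj_inv_of_proj_eq g.2⟩⟩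
  Group.ofRightAxioms
    (fun g h k => Subtype.ext (hG.mul_assoc g h k (g.2.trans h.2.symm) (h.2.trans k.2.symm)))
    (fun g => Subtype.ext (by obtain ⟨g, rfl⟩ := g; exact hG.mul_one g))
    (fun g => Subtype.ext (by obtain ⟨g, rfl⟩ := g; exact hG.mul_inv_cancel g))

theorem mul_mul_inv_mul_eq (hG : IsFiberwiseGroup π m i e) {x : M} {a b a' b' : 𝔾}
    (ha : π a = x) (hb : π b = x) (ha' : π a' = x) (hb' : π b' = x) :
    m (m a b) (i (m a' b')) = m (m a (i a')) (m (m a' (m b (i b'))) (i a')) := by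
  let := hG.fiberGroup x
  have hfiber : ∀ a b a' b' : {g : 𝔾 // π g = x},
      (a * b) * (a' * b')⁻¹ = (a * a'⁻¹) * ((a' * (b * b'⁻¹)) * a'⁻¹) := by
    intros; group
  exact congrArg Subtype.val (hfiber ⟨a, ha⟩ ⟨b, hb⟩ ⟨a', ha'⟩ ⟨b', hb'⟩)

theorem mul_one_of_proj_eq (hG : IsFiberwiseGroup π m i e) {g : 𝔾} {x : M} (hg : π g = x) :
    m g (e x) = g := by
  subst hg; exact hG.mul_one g

theorem one_mul_of_proj_eq (hG : IsFiberwiseGroup π m i e) {g : 𝔾} {x : M} (hg : π g = x) :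
    m (e x) g = g := by
  let := hG.fiberGroup x
  exact congrArg Subtype.val (one_mul (⟨g, hg⟩ : {h : 𝔾 // π h = x}))

theorem mul_inv_cancel_of_proj_eq (hG : IsFiberwiseGroup π m i e) {g : 𝔾} {x : M}
    (hg : π g = x) : m g (i g) = e x := by
  subst hg; exact hG.mul_inv_cancel g

theorem eventually_proj_mul_inv (hG : IsFiberwiseGroup π m i e) [TopologicalSpace M]
    {s s' : M → 𝔾} {x : M} (hs : ∀ᶠ y in nhds x, π (s y) = y)
    (hs' : ∀ᶠ y in nhds x, π (s' y) = y) : ∀ᶠ y in nhds x, π (m (s y) (i (s' y))) = y := by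
  filter_upwards [hs, hs'] with y h h'
  exact hG.proj_mul_of_proj_eq h (hG.proj_inv_of_proj_eq h')

theorem eventually_proj_conj (hG : IsFiberwiseGroup π m i e) [TopologicalSpace M]
    {s w : M → 𝔾} {x : M} (hs : ∀ᶠ y in nhds x, π (s y) = y)
    (hw : ∀ᶠ y in nhds x, π (w y) = y) : ∀ᶠ y in nhds x, π (m (m (s y) (w y)) (i (s y))) = y := by
  filter_upwards [hs, hw] with y h h'
  exact hG.proj_mul_of_proj_eq (hG.proj_mul_of_proj_eq h h') (hG.proj_inv_of_proj_eq h)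

section Differential

variable {𝕜 : Type*} [NontriviallyNormedField 𝕜]
  {EM : Type*} [NormedAddCommGroup EM] [NormedSpace 𝕜 EM] {HM : Type*} [TopologicalSpace HM]
  {IM : ModelWithCorners 𝕜 EM HM} [TopologicalSpace M] [ChartedSpace HM M]
  {EG : Type*} [NormedAddCommGroup EG] [NormedSpace 𝕜 EG] {HG : Type*} [TopologicalSpace HG]
  {IG : ModelWithCorners 𝕜 EG HG} [TopologicalSpace 𝔾] [ChartedSpace HG 𝔾]

theorem mfderiv_mul_apply_of_eq_one (hG : IsFiberwiseGroup π m i e) {u w : M → 𝔾} {x : M}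
    (hm : MDifferentiable (IG.prod IG) IG (Function.uncurry m))
    (he : MDifferentiableAt IM IG e x) (hu : MDifferentiableAt IM IG u x)
    (hw : MDifferentiableAt IM IG w x) (hus : ∀ᶠ y in nhds x, π (u y) = y)
    (hws : ∀ᶠ y in nhds x, π (w y) = y) (hux : u x = e x) (hwx : w x = e x)
    (v : TangentSpace IM x) :
    id (α := EG) (mfderiv IM IG (fun y => m (u y) (w y)) x v) =
      id (α := EG) (mfderiv IM IG u x v) + id (α := EG) (mfderiv IM IG w x v) -
        id (α := EG) (mfderiv IM IG e x v) := by
  have chain {f g : M → 𝔾} (hf : MDifferentiableAt IM IG f x)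
      (hg : MDifferentiableAt IM IG g x) (hfx : f x = e x) (hgx : g x = e x) :=
    mfderiv_comp_prodMk_apply (hm _) hf hg hfx hgx v
  have hue : (fun y => m (u y) (e y)) =ᶠ[nhds x] u :=
    hus.mono fun _ hy => hG.mul_one_of_proj_eq hy
  have hew : (fun y => m (e y) (w y)) =ᶠ[nhds x] w :=
    hws.mono fun _ hy => hG.one_mul_of_proj_eq hy
  have hee : (fun y => m (e y) (e y)) = e := funext fun y => hG.one_mul_of_proj_eq (hG.proj_one y)
  have h_uw := chain hu hw hux hwx
  have h_ue := chain hu he hux rfl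
  have h_ew := chain he hw rfl hwx
  have h_ee := chain he he rfl rfl
  simp only [Function.uncurry_apply_pair] at h_uw h_ue h_ew h_ee
  rw [hue.mfderiv_eq] at h_ue
  rw [hew.mfderiv_eq] at h_ew
  rw [hee] at h_ee
  linear_combination (norm := module) h_uw - h_ue - h_ew + h_ee

theorem mfderiv_conj_apply_of_eq_one (hG : IsFiberwiseGroup π m i e) {s w : M → 𝔾} {x : M}
    {g : 𝔾} (hm : MDifferentiable (IG.prod IG) IG (Function.uncurry m))
    (hi : MDifferentiable IG IG i) (he : MDifferentiableAt IM IG e x)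
    (hs : MDifferentiableAt IM IG s x) (hw : MDifferentiableAt IM IG w x)
    (hss : ∀ᶠ y in nhds x, π (s y) = y) (hsx : s x = g) (hwx : w x = e x)
    (v : TangentSpace IM x) :
    id (α := EG) (mfderiv IM IG (fun y => m (m (s y) (w y)) (i (s y))) x v) =
      id (α := EG) (mfderiv IM IG e x v) +
        id (α := EG) (mfderiv IG IG (fun k => m (m g k) (i g)) (e x)
          (id (α := TangentSpace IG (e x))
            (id (α := EG) (mfderiv IM IG w x v) - id (α := EG) (mfderiv IM IG e x v)))) := by
  have hconj :
      MDifferentiableAt (IG.prod IG) IG (fun q : 𝔾 × 𝔾 => m (m q.1 q.2) (i q.1)) (g, e x) :=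
    (hm _).comp _ (((hm _).comp _ mdifferentiableAt_id).prodMk
      ((hi _).comp _ mdifferentiableAt_fst))
  have hse : (fun y => m (m (s y) (e y)) (i (s y))) =ᶠ[nhds x] e := hss.mono fun y hy => by
    simp only [hG.mul_one_of_proj_eq hy, hG.mul_inv_cancel_of_proj_eq hy]
  have h_sw := mfderiv_comp_prodMk_apply hconj hs hw hsx hwx v
  have h_se := mfderiv_comp_prodMk_apply hconj hs he hsx rfl v
  dsimp only at h_sw h_se
  rw [hse.mfderiv_eq] at h_se
  set Ad := mfderiv IG IG (fun k => m (m g k) (i g)) (e x)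
  have h_sub : id (α := EG) (Ad (id (α := TangentSpace IG (e x))
      (id (α := EG) (mfderiv IM IG w x v) - id (α := EG) (mfderiv IM IG e x v)))) =
      id (α := EG) (Ad (mfderiv IM IG w x v)) - id (α := EG) (Ad (mfderiv IM IG e x v)) :=
    map_sub _ _ _
  linear_combination (norm := module) h_sw - h_se - h_sub

theorem mfderiv_mul_mul_inv_mul_apply (hG : IsFiberwiseGroup π m i e) {a b a' b' : M → 𝔾}
    {x : M} {g : 𝔾} (hm : MDifferentiable (IG.prod IG) IG (Function.uncurry m))
    (hi : MDifferentiable IG IG i) (he : MDifferentiableAt IM IG e x)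
    (ha : MDifferentiableAt IM IG a x) (hb : MDifferentiableAt IM IG b x)
    (ha' : MDifferentiableAt IM IG a' x) (hb' : MDifferentiableAt IM IG b' x)
    (has : ∀ᶠ y in nhds x, π (a y) = y) (hbs : ∀ᶠ y in nhds x, π (b y) = y)
    (ha's : ∀ᶠ y in nhds x, π (a' y) = y) (hb's : ∀ᶠ y in nhds x, π (b' y) = y)
    (hax : a x = g) (ha'x : a' x = g) (hbb'x : b x = b' x) (v : TangentSpace IM x) :
    id (α := EG) (mfderiv IM IG (fun y => m (m (a y) (b y)) (i (m (a' y) (b' y)))) x v) -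
        id (α := EG) (mfderiv IM IG e x v) =
      (id (α := EG) (mfderiv IM IG (fun y => m (a y) (i (a' y))) x v) -
          id (α := EG) (mfderiv IM IG e x v)) +
        id (α := EG) (mfderiv IG IG (fun k => m (m g k) (i g)) (e x)
          (id (α := TangentSpace IG (e x))
            (id (α := EG) (mfderiv IM IG (fun y => m (b y) (i (b' y))) x v) -
              id (α := EG) (mfderiv IM IG e x v)))) := by
  have hmul {f f' : M → 𝔾} (hf : MDifferentiableAt IM IG f x)
      (hf' : MDifferentiableAt IM IG f' x) : MDifferentiableAt IM IG (fun y => m (f y) (f' y)) x :=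
    (hm _).comp x (hf.prodMk hf')
  have hmulinv {f f' : M → 𝔾} (hf : MDifferentiableAt IM IG f x)
      (hf' : MDifferentiableAt IM IG f' x) :
      MDifferentiableAt IM IG (fun y => m (f y) (i (f' y))) x :=
    hmul hf ((hi _).comp x hf')
  have hsplit : (fun y => m (m (a y) (b y)) (i (m (a' y) (b' y)))) =ᶠ[nhds x]
      fun y => m (m (a y) (i (a' y))) (m (m (a' y) (m (b y) (i (b' y)))) (i (a' y))) := by
    filter_upwards [has, hbs, ha's, hb's] with y h₁ h₂ h₃ h₄
    exact hG.mul_mul_inv_mul_eq h₁ h₂ h₃ h₄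
  have hθa := hG.eventually_proj_mul_inv has ha's
  have hθb := hG.eventually_proj_mul_inv hbs hb's
  have hconj := hG.eventually_proj_conj ha's hθb
  have hgx : π g = x := ha'x ▸ ha's.self_of_nhds
  have hθax : m (a x) (i (a' x)) = e x := by
    rw [hax, ha'x, hG.mul_inv_cancel_of_proj_eq hgx]
  have hθbx : m (b x) (i (b' x)) = e x := by
    rw [hbb'x, hG.mul_inv_cancel_of_proj_eq hb's.self_of_nhds]
  have hconjx : m (m (a' x) (m (b x) (i (b' x)))) (i (a' x)) = e x := by
    rw [hθbx, ha'x, hG.mul_one_of_proj_eq hgx, hG.mul_inv_cancel_of_proj_eq hgx]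
  have h_mul := hG.mfderiv_mul_apply_of_eq_one hm he (hmulinv ha ha')
    (hmulinv (hmul ha' (hmulinv hb hb')) ha') hθa hconj hθax hconjx v
  have h_conj := hG.mfderiv_conj_apply_of_eq_one hm hi he ha' (hmulinv hb hb') ha's ha'x hθbx v
  rw [hsplit.mfderiv_eq]
  linear_combination (norm := module) h_mul + h_conj

end Differential

end IsFiberwiseGroup

/-- Jets are represented by local sections: `σ(g) = j¹ₓ s_g`, `σ'(g) = j¹ₓ s'_g`, and
`θ(g) v = dₓ(s_g · (s'_g)⁻¹) v - dₓ e v` in the model space of `𝔾`. -/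
theorem difference_of_group_connections_is_cocycle_general
    {EM : Type*} [NormedAddCommGroup EM] [NormedSpace ℝ EM]
    {HM : Type*} [TopologicalSpace HM] {IM : ModelWithCorners ℝ EM HM}
    {M : Type*} [TopologicalSpace M] [ChartedSpace HM M]
    {EG : Type*} [NormedAddCommGroup EG] [NormedSpace ℝ EG]
    {HG : Type*} [TopologicalSpace HG] {IG : ModelWithCorners ℝ EG HG}
    {𝔾 : Type*} [TopologicalSpace 𝔾] [ChartedSpace HG 𝔾]
    (π : 𝔾 → M)
    (m : 𝔾 → 𝔾 → 𝔾) (i : 𝔾 → 𝔾) (e : M → 𝔾)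
    (hm : ContMDiff (IG.prod IG) IG (⊤ : ℕ∞) (Function.uncurry m))
    (hi : ContMDiff IG IG (⊤ : ℕ∞) i) (he : ContMDiff IM IG (⊤ : ℕ∞) e)
    (hπe : ∀ x : M, π (e x) = x)
    (hπm : ∀ g h : 𝔾, π g = π h → π (m g h) = π g)
    (hπi : ∀ g : 𝔾, π (i g) = π g)
    (hassoc : ∀ g h k : 𝔾, π g = π h → π h = π k → m (m g h) k = m g (m h k))
    (hone : ∀ g : 𝔾, m (e (π g)) g = g ∧ m g (e (π g)) = g)
    (hinv : ∀ g : 𝔾, m g (i g) = e (π g) ∧ m (i g) g = e (π g))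
    (x : M) (gg hh : 𝔾)
    (sg sh sgh s'g s'h s'gh : M → 𝔾)
    (hsg : ContMDiffAt IM IG (⊤ : ℕ∞) sg x) (hsh : ContMDiffAt IM IG (⊤ : ℕ∞) sh x)
    (hsgh : ContMDiffAt IM IG (⊤ : ℕ∞) sgh x)
    (hs'g : ContMDiffAt IM IG (⊤ : ℕ∞) s'g x) (hs'h : ContMDiffAt IM IG (⊤ : ℕ∞) s'h x)
    (hs'gh : ContMDiffAt IM IG (⊤ : ℕ∞) s'gh x)
    (hsgs : ∀ᶠ y in nhds x, π (sg y) = y) (hshs : ∀ᶠ y in nhds x, π (sh y) = y)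
    (hs'gs : ∀ᶠ y in nhds x, π (s'g y) = y) (hs'hs : ∀ᶠ y in nhds x, π (s'h y) = y)
    (hsgx : sg x = gg) (hshx : sh x = hh) (hsghx : sgh x = m gg hh)
    (hs'gx : s'g x = gg) (hs'hx : s'h x = hh) (hs'ghx : s'gh x = m gg hh)
    -- `σ` and `σ'` are group bundle morphisms (on the jets involved):
    (hσmul : mfderiv IM IG (fun y => m (sg y) (sh y)) x = mfderiv IM IG sgh x)
    (hσ'mul : mfderiv IM IG (fun y => m (s'g y) (s'h y)) x = mfderiv IM IG s'gh x) :
    ∀ v : TangentSpace IM x,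
      id (α := EG) (mfderiv IM IG (fun y => m (sgh y) (i (s'gh y))) x v) -
          id (α := EG) (mfderiv IM IG e x v) =
        (id (α := EG) (mfderiv IM IG (fun y => m (sg y) (i (s'g y))) x v) -
            id (α := EG) (mfderiv IM IG e x v)) +
          id (α := EG)
            ((mfderiv IG IG (fun k => m (m gg k) (i gg)) (e x))
              (id (α := TangentSpace IG (e x))
                (id (α := EG) (mfderiv IM IG (fun y => m (sh y) (i (s'h y))) x v) -
                  id (α := EG) (mfderiv IM IG e x v)))) := by
  intro v
  have hG : IsFiberwiseGroup π m i e :=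
    ⟨hπe, hπm, hπi, hassoc, fun g => (hone g).2, fun g => (hinv g).1⟩
  have hmd : MDifferentiable (IG.prod IG) IG (Function.uncurry m) := hm.mdifferentiable (by simp)
  have hid : MDifferentiable IG IG i := hi.mdifferentiable (by simp)
  have hmul {f f' : M → 𝔾} (hf : MDifferentiableAt IM IG f x)
      (hf' : MDifferentiableAt IM IG f' x) : MDifferentiableAt IM IG (fun y => m (f y) (f' y)) x :=
    (hmd _).comp x (hf.prodMk hf')
  have dsg := hsg.mdifferentiableAt (by simp)
  have dsh := hsh.mdifferentiableAt (by simp)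
  have ds'g := hs'g.mdifferentiableAt (by simp)
  have ds'h := hs'h.mdifferentiableAt (by simp)
  have hjet : mfderiv IM IG (fun y => m (sgh y) (i (s'gh y))) x =
      mfderiv IM IG (fun y => m (m (sg y) (sh y)) (i (m (s'g y) (s'h y)))) x :=
    mfderiv_comp_prodMk_congr (F := fun q : 𝔾 × 𝔾 => m q.1 (i q.2))
      ((hmd _).comp _ (mdifferentiableAt_fst.prodMk ((hid _).comp _ mdifferentiableAt_snd)))
      (hsgh.mdifferentiableAt (by simp)) (hs'gh.mdifferentiableAt (by simp))
      (hmul dsg dsh) (hmul ds'g ds'h) hsghx hs'ghx (by rw [hsgx, hshx]) (by rw [hs'gx, hs'hx])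
      hσmul.symm hσ'mul.symm
  rw [hjet]
  exact hG.mfderiv_mul_mul_inv_mul_apply hmd hid (he.mdifferentiable (by simp) x) dsg dsh ds'g
    ds'h hsgs hshs hs'gs hs'hs hsgx hs'gx (hshx.trans hs'hx.symm) v

/-- Let `σ` and `σ'` be the jet-bundle sections of two group connections
on a group bundle `𝔾 → M` (group bundle morphisms splitting `π₁₀ : J¹𝔾 → 𝔾`).  Jets are
represented by local sections: `σ g = j¹_x s_g` with `s_g x = g`, and the morphism
property of `σ` says `j¹_x (s_g · s_h) = j¹_x s_{gh}`.  The difference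
`θ(g) = ι (σ(g) · σ'(g)⁻¹) = d_x (s_g · (s'_g)⁻¹) - d_x e` is, in each direction
`v ∈ T_x M`, a `1`-cocycle of `𝔾_x` with values in `Lie(𝔾_x)` for the adjoint
representation: `θ(g·h)(v) = θ(g)(v) + Adj_g (θ(h)(v))`. -/
theorem difference_of_group_connections_is_cocycle
    {EM : Type*} [NormedAddCommGroup EM] [NormedSpace ℝ EM]
    {HM : Type*} [TopologicalSpace HM] {IM : ModelWithCorners ℝ EM HM}
    {M : Type*} [TopologicalSpace M] [ChartedSpace HM M] [IsManifold IM (⊤ : ℕ∞) M]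
    {EG : Type*} [NormedAddCommGroup EG] [NormedSpace ℝ EG]
    {HG : Type*} [TopologicalSpace HG] {IG : ModelWithCorners ℝ EG HG}
    {𝔾 : Type*} [TopologicalSpace 𝔾] [ChartedSpace HG 𝔾] [IsManifold IG (⊤ : ℕ∞) 𝔾]
    (π : 𝔾 → M) (hπ : ContMDiff IG IM (⊤ : ℕ∞) π)
    (hsub : ∀ g : 𝔾, Function.Surjective (mfderiv IG IM π g))
    (m : 𝔾 → 𝔾 → 𝔾) (i : 𝔾 → 𝔾) (e : M → 𝔾)
    (hm : ContMDiff (IG.prod IG) IG (⊤ : ℕ∞) (Function.uncurry m))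
    (hi : ContMDiff IG IG (⊤ : ℕ∞) i) (he : ContMDiff IM IG (⊤ : ℕ∞) e)
    (hπe : ∀ x : M, π (e x) = x)
    (hπm : ∀ g h : 𝔾, π g = π h → π (m g h) = π g)
    (hπi : ∀ g : 𝔾, π (i g) = π g)
    (hassoc : ∀ g h k : 𝔾, π g = π h → π h = π k → m (m g h) k = m g (m h k))
    (hone : ∀ g : 𝔾, m (e (π g)) g = g ∧ m g (e (π g)) = g)
    (hinv : ∀ g : 𝔾, m g (i g) = e (π g) ∧ m (i g) g = e (π g))
    (x : M) (gg hh : 𝔾) (hggx : π gg = x) (hhhx : π hh = x)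
    (sg sh sgh s'g s'h s'gh : M → 𝔾)
    (hsg : ContMDiffAt IM IG (⊤ : ℕ∞) sg x) (hsh : ContMDiffAt IM IG (⊤ : ℕ∞) sh x)
    (hsgh : ContMDiffAt IM IG (⊤ : ℕ∞) sgh x)
    (hs'g : ContMDiffAt IM IG (⊤ : ℕ∞) s'g x) (hs'h : ContMDiffAt IM IG (⊤ : ℕ∞) s'h x)
    (hs'gh : ContMDiffAt IM IG (⊤ : ℕ∞) s'gh x)
    (hsgs : ∀ᶠ y in nhds x, π (sg y) = y) (hshs : ∀ᶠ y in nhds x, π (sh y) = y)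
    (hsghs : ∀ᶠ y in nhds x, π (sgh y) = y)
    (hs'gs : ∀ᶠ y in nhds x, π (s'g y) = y) (hs'hs : ∀ᶠ y in nhds x, π (s'h y) = y)
    (hs'ghs : ∀ᶠ y in nhds x, π (s'gh y) = y)
    (hsgx : sg x = gg) (hshx : sh x = hh) (hsghx : sgh x = m gg hh)
    (hs'gx : s'g x = gg) (hs'hx : s'h x = hh) (hs'ghx : s'gh x = m gg hh)
    -- `σ` and `σ'` are group bundle morphisms (on the jets involved):
    (hσmul : mfderiv IM IG (fun y => m (sg y) (sh y)) x = mfderiv IM IG sgh x)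
    (hσ'mul : mfderiv IM IG (fun y => m (s'g y) (s'h y)) x = mfderiv IM IG s'gh x) :
    ∀ v : TangentSpace IM x,
      id (α := EG) (mfderiv IM IG (fun y => m (sgh y) (i (s'gh y))) x v) -
          id (α := EG) (mfderiv IM IG e x v) =
        (id (α := EG) (mfderiv IM IG (fun y => m (sg y) (i (s'g y))) x v) -
            id (α := EG) (mfderiv IM IG e x v)) +
          id (α := EG)
            ((mfderiv IG IG (fun k => m (m gg k) (i gg)) (e x))
              (id (α := TangentSpace IG (e x))
                (id (α := EG) (mfderiv IM IG (fun y => m (sh y) (i (s'h y))) x v) -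
                  id (α := EG) (mfderiv IM IG e x v)))) :=
  difference_of_group_connections_is_cocycle_general π m i e hm hi he hπe hπm hπi hassoc hone hinv x
    gg hh sg sh sgh s'g s'h s'gh hsg hsh hsgh hs'g hs'h hs'gh hsgs hshs hs'gs hs'hs hsgx hshx hsghx
    hs'gx hs'hx hs'ghx hσmul hσ'mul
end
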